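/- arXiv:1706.03383 — 2 statements merged into one kernel-verified Lean document; each statement's English description precedes it below -/
import Mathlib

section
/- For any prime power q, any real 0 ≤ δ < 1 - 1/q, any real 0 ≤ ρ < 1 - H_q(δ), and all sufficiently large n, a uniformly random linear code C : F_q^{⌊ρn⌋} → F_q^n (given by a uniformly random n × ⌊ρn⌋ generating matrix) has relative distance at least δ with probability at least 1 - 2^{-Ω(n)}. -/
/-!
Union bound over the nonzero messages `m`: for fixed `m ≠ 0` the map `G ↦ G *ᵥ m` is a surjective
additive homomorphism, so for a uniformly random generator matrix `G` the codeword `G *ᵥ m` is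
uniform on `F^n` and lies in the Hamming ball of radius `δ n` with probability at most
`q^{(H_q(δ) - 1) n}`. Summing over the at most `q^k ≤ q^{ρ n}` messages bounds the failure
probability by `q^{-(1 - H_q(δ) - ρ) n}`.

The volume of the ball is bounded by weighting each coordinate with the probability distribution
that gives mass `1 - δ` to `0` and `δ / (q - 1)` to every other symbol. The weights of all vectors
sum to `1`, and because `δ ≤ 1 - 1/q` (i.e. `δ / (q - 1) ≤ 1 - δ`) every vector of weight below
`δ n` has weight at least `(δ / (q - 1))^{δ n} (1 - δ)^{(1 - δ) n} = q^{-H_q(δ) n}`.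
-/

/-- The `q`-ary entropy function. -/
noncomputable def qEntropy (q : ℕ) (x : ℝ) : ℝ :=
  x * Real.logb q (q - 1) + x * Real.logb q (1 / x) + (1 - x) * Real.logb q (1 / (1 - x))

open Finset Matrix Real

namespace AddMonoidHom

variable {A B : Type*} [AddGroup A] [Fintype A] [AddGroup B] [Fintype B] [DecidableEq B]

theorem card_filter_comp_of_surjective (f : A →+ B) (hf : Function.Surjective f)
    (P : B → Prop) [DecidablePred P] :
    #{a | P (f a)} = #{b | P b} * #{a | f a = 0} := by
  rw [card_eq_sum_card_fiberwise (f := f) (t := {b | P b}) fun a ha ↦ by simpa using ha,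
    ← smul_eq_mul, ← sum_const]
  refine sum_congr rfl fun b hb ↦ ?_
  rw [filter_filter, ← card_fiber_eq_of_mem_range f (hf b) (hf 0)]
  congr 1
  exact filter_congr fun a _ ↦ and_iff_right_of_imp fun h ↦ h ▸ (mem_filter.1 hb).2

theorem card_filter_comp_div_card_of_surjective (f : A →+ B)
    (hf : Function.Surjective f) (P : B → Prop) [DecidablePred P] :
    (#{a | P (f a)} : ℝ) / Fintype.card A = #{b | P b} / Fintype.card B := by
  have hker : #{a | f a = 0} ≠ 0 := (card_pos.2 ⟨0, by simp⟩).ne'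
  have hA := f.card_filter_comp_of_surjective hf (fun _ ↦ True)
  simp only [filter_true, card_univ] at hA
  rw [f.card_filter_comp_of_surjective hf, hA]
  push_cast
  rw [mul_div_mul_right _ _ (by exact_mod_cast hker)]

end AddMonoidHom

theorem Matrix.mulVec_surjective_of_ne_zero {m n K : Type*} [Fintype n] [DecidableEq n]
    [DivisionRing K] {v : n → K} (hv : v ≠ 0) :
    Function.Surjective fun G : Matrix m n K ↦ G *ᵥ v := by
  obtain ⟨i, hi⟩ : ∃ i, v i ≠ 0 := Function.ne_iff.1 hv
  refine fun y ↦ ⟨vecMulVec y (Pi.single i (v i)⁻¹), ?_⟩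
  dsimp only
  rw [vecMulVec_mulVec, single_dotProduct, inv_mul_cancel₀ hi, MulOpposite.op_one, one_smul]

theorem card_filter_exists_mulVec_div_card_le {m n F : Type*} [Fintype m] [Fintype n]
    [DecidableEq m] [DecidableEq n] [DivisionRing F] [Fintype F] [DecidableEq F]
    (P : (m → F) → Prop) [DecidablePred P] :
    (#{G : Matrix m n F | ∃ v ≠ 0, P (G *ᵥ v)} : ℝ) / Fintype.card (Matrix m n F) ≤
      Fintype.card (n → F) * (#{y | P y} / Fintype.card (m → F)) := by
  have hsub : ({G : Matrix m n F | ∃ v ≠ 0, P (G *ᵥ v)} : Finset _) ⊆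
      ({v | v ≠ 0} : Finset (n → F)).biUnion fun v ↦ {G | P (G *ᵥ v)} := by
    intro G hG
    obtain ⟨v, hv, hP⟩ := (mem_filter.1 hG).2
    exact mem_biUnion.2 ⟨v, by simpa using hv, by simpa using hP⟩
  calc (#{G : Matrix m n F | ∃ v ≠ 0, P (G *ᵥ v)} : ℝ) / Fintype.card (Matrix m n F)
      ≤ (∑ v ∈ ({v | v ≠ 0} : Finset (n → F)), (#{G : Matrix m n F | P (G *ᵥ v)} : ℝ)) /
          Fintype.card (Matrix m n F) := by
        gcongr
        exact_mod_cast (card_le_card hsub).trans card_biUnion_le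
    _ = ∑ v ∈ ({v | v ≠ 0} : Finset (n → F)), (#{y | P y} : ℝ) / Fintype.card (m → F) := by
        rw [sum_div]
        refine sum_congr rfl fun v hv ↦ ?_
        exact (Matrix.mulVec.addMonoidHomLeft v).card_filter_comp_div_card_of_surjective
          (Matrix.mulVec_surjective_of_ne_zero (by simpa using hv)) P
    _ ≤ Fintype.card (n → F) * (#{y | P y} / Fintype.card (m → F)) := by
        rw [sum_const, nsmul_eq_mul]
        gcongr
        exact_mod_cast card_le_univ _

theorem card_mul_le_one_of_le_prod {ι α : Type*} [Fintype ι] [DecidableEq ι] [Fintype α]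
    (f : α → ℝ) (hf0 : ∀ x, 0 ≤ f x) (hf1 : ∑ x, f x = 1) (S : Finset (ι → α)) {t : ℝ}
    (ht : ∀ y ∈ S, t ≤ ∏ i, f (y i)) :
    #S * t ≤ 1 :=
  calc #S * t = ∑ _y ∈ S, t := by rw [sum_const, nsmul_eq_mul]
    _ ≤ ∑ y ∈ S, ∏ i, f ((y : ι → α) i) := sum_le_sum ht
    _ ≤ ∑ y : ι → α, ∏ i, f (y i) :=
        sum_le_univ_sum_of_nonneg fun y ↦ prod_nonneg fun i _ ↦ hf0 (y i)
    _ = 1 := by rw [← Fintype.prod_sum, hf1, prod_const_one]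

theorem sum_ite_eq_zero {F : Type*} [Fintype F] [Zero F] [DecidableEq F] (a b : ℝ) :
    ∑ x : F, (if x = 0 then b else a) = b + a * (Fintype.card F - 1) := by
  rw [Fintype.sum_eq_add_sum_compl 0, if_pos rfl,
    sum_congr rfl fun x hx ↦ if_neg (by simpa using hx), sum_const, card_compl, card_singleton,
    nsmul_eq_mul, Nat.cast_sub Fintype.card_pos, Nat.cast_one, mul_comm]

theorem prod_ite_apply_eq_zero {ι F : Type*} [Fintype ι] [Zero F] [DecidableEq F] (y : ι → F)
    (a b : ℝ) :
    ∏ i, (if y i = 0 then b else a) =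
      a ^ hammingNorm y * b ^ (Fintype.card ι - hammingNorm y) := by
  rw [prod_ite, prod_const, prod_const, mul_comm]
  congr 2
  have := card_filter_add_card_filter_not (s := univ) (p := fun i ↦ y i = 0)
  simp only [card_univ, hammingNorm, ne_eq] at this ⊢
  omega

theorem rpow_mul_rpow_sub_le_of_le {a b s t x : ℝ} (ha : 0 < a) (hab : a ≤ b) (hst : s ≤ t) :
    a ^ t * b ^ (x - t) ≤ a ^ s * b ^ (x - s) := by
  have hb : 0 < b := ha.trans_le hab
  have key : ∀ u, a ^ u * b ^ (x - u) = (a / b) ^ u * b ^ x := fun u ↦ by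
    rw [div_rpow ha.le hb.le, rpow_sub hb]
    field_simp
  rw [key, key]
  exact mul_le_mul_of_nonneg_right
    (rpow_le_rpow_of_exponent_ge (div_pos ha hb) ((div_le_one hb).2 hab) hst) (by positivity)

theorem rpow_neg_qEntropy_mul {q : ℕ} (hq1 : (1 : ℝ) < q) {δ : ℝ} (hδ0 : 0 < δ) (hδ1 : δ < 1)
    (x : ℝ) :
    (q : ℝ) ^ (-(qEntropy q δ * x)) = (δ / (q - 1)) ^ (δ * x) * (1 - δ) ^ ((1 - δ) * x) := by
  have hq0 : (0 : ℝ) < q := by positivity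
  have hlog : -(qEntropy q δ * x) =
      logb q (δ / (q - 1)) * (δ * x) + logb q (1 - δ) * ((1 - δ) * x) := by
    rw [qEntropy, logb_div hδ0.ne' (by linarith), one_div, one_div, logb_inv, logb_inv]
    ring
  rw [hlog, rpow_add hq0, rpow_mul hq0.le, rpow_mul hq0.le,
    rpow_logb hq0 hq1.ne' (div_pos hδ0 (by linarith)), rpow_logb hq0 hq1.ne' (by linarith)]

theorem card_hammingNorm_lt_le {ι F : Type*} [Fintype ι] [DecidableEq ι] [Fintype F]
    [DecidableEq F] [Zero F] {δ : ℝ} (hδ0 : 0 ≤ δ) (hδ : δ ≤ 1 - 1 / Fintype.card F) :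
    (#{y : ι → F | (hammingNorm y : ℝ) < δ * Fintype.card ι} : ℝ) ≤
      (Fintype.card F : ℝ) ^ (qEntropy (Fintype.card F) δ * Fintype.card ι) := by
  set q := Fintype.card F
  set n := Fintype.card ι
  rcases hδ0.eq_or_lt with rfl | hδ0
  · rw [filter_false_of_mem fun y _ ↦ by simp, card_empty, Nat.cast_zero]
    positivity
  have hq0 : (0 : ℝ) < q := by exact_mod_cast Fintype.card_pos
  have hq : (1 : ℝ) < q := (div_lt_one hq0).1 (by linarith)
  have hδ1 : δ < 1 := hδ.trans_lt (by simp; positivity)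
  set a := δ / (q - 1)
  set b := 1 - δ
  have ha : 0 < a := div_pos hδ0 (by linarith)
  have hab : a ≤ b := by
    have := mul_le_mul_of_nonneg_right hδ hq0.le
    rw [sub_mul, one_div_mul_cancel hq0.ne', one_mul] at this
    rw [div_le_iff₀ (by linarith)]
    linarith
  have hsum : ∑ x : F, (if x = 0 then b else a) = 1 := by
    rw [sum_ite_eq_zero, div_mul_cancel₀ _ (by linarith)]
    ring
  have key := card_mul_le_one_of_le_prod (fun x ↦ if x = 0 then b else a)
    (fun x ↦ by split_ifs <;> positivity) hsum {y : ι → F | (hammingNorm y : ℝ) < δ * n}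
    (t := q ^ (-(qEntropy q δ * n))) ?_
  · rwa [rpow_neg hq0.le, ← div_eq_mul_inv, div_le_one (by positivity)] at key
  intro y hy
  rw [prod_ite_apply_eq_zero, rpow_neg_qEntropy_mul hq hδ0 hδ1, ← rpow_natCast, ← rpow_natCast,
    Nat.cast_sub hammingNorm_le_card_fintype, show (1 - δ) * n = n - δ * n by ring]
  exact rpow_mul_rpow_sub_le_of_le ha hab (mem_filter.1 hy).2.le

theorem card_filter_exists_hammingNorm_mulVec_lt_div_card_le {ι κ F : Type*} [Fintype ι]
    [DecidableEq ι] [Fintype κ] [DecidableEq κ] [DivisionRing F] [Fintype F] [DecidableEq F]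
    {δ : ℝ} (hδ0 : 0 ≤ δ) (hδ : δ ≤ 1 - 1 / Fintype.card F) :
    (#{G : Matrix ι κ F | ∃ m ≠ 0, (hammingNorm (G *ᵥ m) : ℝ) < δ * Fintype.card ι} : ℝ) /
        Fintype.card (Matrix ι κ F) ≤
      (Fintype.card F : ℝ) ^
        (Fintype.card κ + qEntropy (Fintype.card F) δ * Fintype.card ι - Fintype.card ι) := by
  have hq0 : (0 : ℝ) < Fintype.card F := by exact_mod_cast Fintype.card_pos
  calc _ ≤ (Fintype.card (κ → F) : ℝ) *
          (#{y : ι → F | (hammingNorm y : ℝ) < δ * Fintype.card ι} / Fintype.card (ι → F)) :=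
        card_filter_exists_mulVec_div_card_le _
    _ ≤ _ := by
      rw [rpow_sub hq0, rpow_add hq0, mul_div_assoc, rpow_natCast, rpow_natCast]
      simp only [Fintype.card_pi, prod_const, card_univ, Nat.cast_pow]
      gcongr
      exact card_hammingNorm_lt_le hδ0 hδ

theorem card_filter_div_card_eq_one_sub {α : Type*} [Fintype α] [Nonempty α] (p : α → Prop)
    [DecidablePred p] :
    (#{x | p x} : ℝ) / Fintype.card α = 1 - #{x | ¬p x} / Fintype.card α := by
  rw [eq_sub_iff_add_eq, ← add_div, div_eq_one_iff_eq (by positivity), ← Nat.cast_add,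
    card_filter_add_card_filter_not, card_univ]

/-- Gilbert–Varshamov bound: a uniformly random linear code of rate
`ρ < 1 - H_q(δ)` has relative distance at least `δ` with probability
`1 - 2^{-Ω(n)}`, for sufficiently large `n`. -/
theorem gilbert_varshamov (F : Type*) [Field F] [Fintype F] [DecidableEq F] (q : ℕ)
    (hq : Fintype.card F = q) (δ ρ : ℝ) (hδ0 : 0 ≤ δ) (hδ : δ < 1 - 1 / q)
    (hρ0 : 0 ≤ ρ) (hρ : ρ < 1 - qEntropy q δ) :
    ∃ c : ℝ, 0 < c ∧ ∃ N : ℕ, ∀ n : ℕ, N ≤ n →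
      (1 : ℝ) - 2 ^ (-(c * n)) ≤
        (Nat.card {G : Matrix (Fin n) (Fin ⌊ρ * n⌋₊) F //
            ∀ m : Fin ⌊ρ * n⌋₊ → F, m ≠ 0 → δ ≤ (hammingNorm (G.mulVec m) : ℝ) / n} : ℝ)
          / (Nat.card (Matrix (Fin n) (Fin ⌊ρ * n⌋₊) F) : ℝ) := by
  subst hq
  set q := Fintype.card F
  have hq : (1 : ℝ) < q := by exact_mod_cast Fintype.one_lt_card
  set ε := 1 - qEntropy q δ - ρ
  refine ⟨ε * logb 2 q, mul_pos (by linarith) (logb_pos one_lt_two hq), 1, fun n hn ↦ ?_⟩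
  set k := ⌊ρ * n⌋₊
  have hn : (0 : ℝ) < n := by exact_mod_cast hn
  have hk : (k : ℝ) ≤ ρ * n := Nat.floor_le (by positivity)
  have hbad := card_filter_exists_hammingNorm_mulVec_lt_div_card_le (ι := Fin n) (κ := Fin k)
    hδ0 hδ.le
  have hrate : (q : ℝ) ^ (k + qEntropy q δ * n - n) ≤ 2 ^ (-(ε * logb 2 q * n)) := by
    rw [show -(ε * logb 2 q * n) = logb 2 q * -(ε * n) by ring, rpow_mul zero_le_two,
      rpow_logb two_pos (by norm_num) (by positivity)]
    exact rpow_le_rpow_of_exponent_le hq.le (by linarith)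
  have hcompl : ({G | ∃ m ≠ 0, (hammingNorm (G *ᵥ m) : ℝ) < δ * n} :
      Finset (Matrix (Fin n) (Fin k) F)) =
      ({G | ¬∀ m : Fin k → F, m ≠ 0 → δ ≤ (hammingNorm (G *ᵥ m) : ℝ) / n} : Finset _) := by
    ext G
    simp only [not_forall, not_le, div_lt_iff₀ hn, exists_prop]
  rw [Fintype.card_fin, Fintype.card_fin, hcompl] at hbad
  rw [Nat.card_eq_fintype_card, Fintype.card_subtype, Nat.card_eq_fintype_card,
    card_filter_div_card_eq_one_sub]
  linarith
end

section
/- For any prime power q, any real 0 ≤ α < 1 - 1/q, any positive integer L, any 0 ≤ ρ < 1 - H_q(α) - 1/log_q(L+1), and all sufficiently large n, a uniformly random linear code C : F_q^{⌊ρn⌋} → F_q^n is (α, L)-list decodable with probability at least 1 - 2^{-Ω(n)}. -/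
/-!
If a generator matrix `G` is not `(α, L)`-list decodable, some Hamming ball `B(w, αn)` contains
`G v₁, …, G v_J` for linearly independent messages `v_j`, with `J = ⌈log_q (L + 1)⌉`: the `L + 1`
messages decoded near `w` cannot all lie in a subspace of dimension `< J`. For fixed independent
`v_j`, the map `G ↦ (G v_j)_j` is a surjective linear map, so the `G v_j` are independent and
uniform and the event has probability `(|B| / q^n)^J ≤ q^{-(1 - H_q(α)) n J}`. A union bound over
the `q^n` centres and `q^{kJ}` tuples bounds the failure probability by
`q^{n + (k - (1 - H_q(α)) n) J}`, which is exponentially small once `k ≤ ρ n`.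
-/

open Finset Matrix

theorem AddMonoidHom.card_filter_mem_mul_card {M N : Type*} [AddGroup M] [AddGroup N]
    [Fintype M] [Fintype N] [DecidableEq N] (φ : M →+ N) (hφ : Function.Surjective φ)
    (S : Finset N) : #{m | φ m ∈ S} * Fintype.card N = #S * Fintype.card M := by
  have hfiber : ∀ T : Finset N, #{m | φ m ∈ T} = #T * #{m | φ m = 0} := fun T => by
    rw [← sum_card_fiberwise_eq_card_filter]
    exact sum_const_nat fun y _ =>
      AddMonoidHom.card_fiber_eq_of_mem_range φ (hφ y) ⟨0, map_zero φ⟩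
  have hM := hfiber univ
  simp only [mem_univ, filter_true, card_univ] at hM
  rw [hfiber, hM, mul_right_comm, mul_assoc]

theorem LinearIndependent.surjective_comp {K V W ι : Type*} [DivisionRing K] [AddCommGroup V]
    [Module K V] [AddCommGroup W] [Module K W] [Fintype ι] {v : ι → V}
    (hv : LinearIndependent K v) : Function.Surjective fun f : V →ₗ[K] W => f ∘ v := by
  classical
  obtain ⟨g, hg⟩ := (Fintype.linearCombination K v).exists_leftInverse_of_injective
    (LinearMap.ker_eq_bot.mpr hv.fintypeLinearCombination_injective)
  refine fun y => ⟨Fintype.linearCombination K y ∘ₗ g, funext fun i => ?_⟩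
  have : g (v i) = Pi.single i 1 := by
    simpa using LinearMap.congr_fun hg (Pi.single i 1)
  simp [this]

theorem Matrix.card_filter_forall_mulVec_mem_div {m k ι F : Type*} [Fintype m] [DecidableEq m]
    [Fintype k] [DecidableEq k] [Fintype ι] [Field F] [Fintype F] [DecidableEq F] {v : ι → k → F}
    (hv : LinearIndependent F v) (B : Finset (m → F)) :
    (#{G : Matrix m k F | ∀ i, G *ᵥ v i ∈ B} : ℝ) / Fintype.card (Matrix m k F) =
      (#B / Fintype.card (m → F) : ℝ) ^ Fintype.card ι := by
  classical
  let φ : Matrix m k F →+ (ι → m → F) :=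
    AddMonoidHom.mk' (fun G i => G *ᵥ v i) fun G H => funext fun i => Matrix.add_mulVec G H (v i)
  have hφ : Function.Surjective φ := by
    convert (hv.surjective_comp (W := m → F)).comp Matrix.toLin'.surjective using 1
    ext G i : 2
    simp [φ, Matrix.toLin'_apply]
  have hcount := φ.card_filter_mem_mul_card hφ (Fintype.piFinset fun _ => B)
  simp only [Fintype.mem_piFinset, Fintype.card_piFinset, prod_const, card_univ,
    Fintype.card_fun (α := ι)] at hcount
  have hpos : (0 : ℝ) < Fintype.card (m → F) := by exact_mod_cast Fintype.card_pos
  rw [div_pow, div_eq_div_iff (by positivity) (by positivity)]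
  exact_mod_cast hcount

theorem exists_linearIndependent_fin_clog_of_le_card {K V : Type*} [Field K] [Fintype K]
    [AddCommGroup V] [Module K V] [Finite V] {S : Set V} {m : ℕ} (hS : m ≤ Nat.card S) :
    ∃ v : Fin (Nat.clog (Fintype.card K) m) → V, LinearIndependent K v ∧ ∀ j, v j ∈ S := by
  classical
  have := Fintype.ofFinite V
  obtain ⟨b, hbS, hspan, hli⟩ := exists_linearIndependent K S
  have hcard : m ≤ Fintype.card K ^ Fintype.card ↥b := calc
    m ≤ Nat.card S := hS
    _ ≤ Nat.card (Submodule.span K S) := Nat.card_mono (Set.toFinite _) Submodule.subset_span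
    _ = Fintype.card K ^ Fintype.card ↥b := by
      rw [← hspan, Nat.card_eq_fintype_card, Module.card_eq_pow_finrank (K := K),
        finrank_span_set_eq_card hli, Set.toFinset_card]
  obtain ⟨e⟩ := Function.Embedding.nonempty_of_card_le (α := Fin _) (β := b)
    (by simpa using Nat.clog_le_of_le_pow hcard)
  exact ⟨(↑) ∘ e, hli.comp e e.injective, fun j => hbS (e j).2⟩

theorem rpow_qEntropy_mul_mul_rpow {q : ℕ} (hq : 1 < q) {α : ℝ} (hα0 : 0 < α) (hα1 : α < 1)
    (x : ℝ) :
    (q : ℝ) ^ (qEntropy q α * x) * (α / ((q - 1) * (1 - α))) ^ (α * x) = (1 - α) ^ (-x) := by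
  have hqR : (1 : ℝ) < q := by exact_mod_cast hq
  have hq1 : (0 : ℝ) < q - 1 := by linarith
  have h1α : 0 < 1 - α := by linarith
  have hlogt : Real.log (α / ((q - 1) * (1 - α))) =
      Real.log α - Real.log (q - 1) - Real.log (1 - α) := by
    rw [Real.log_div hα0.ne' (by positivity), Real.log_mul hq1.ne' h1α.ne']
    ring
  have hlogq : Real.log q ≠ 0 := (Real.log_pos hqR).ne'
  rw [Real.rpow_def_of_pos (by linarith), Real.rpow_def_of_pos (by positivity),
    Real.rpow_def_of_pos h1α, ← Real.exp_add, hlogt]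
  congr 1
  simp only [qEntropy, Real.logb, one_div, Real.log_inv]
  field_simp
  ring

section HammingBall

variable {ι β : Type*} [Fintype ι] [DecidableEq ι] [Fintype β] [DecidableEq β]

noncomputable def hammingBall (w : ι → β) (r : ℝ) : Finset (ι → β) :=
  {v | (hammingDist v w : ℝ) ≤ r}

theorem sum_pow_hammingDist {R : Type*} [CommRing R] (w : ι → β) (t : R) :
    ∑ v : ι → β, t ^ hammingDist v w = (1 + (Fintype.card β - 1) * t) ^ Fintype.card ι := by
  have hcoord (b : β) : ∑ a : β, (if a = b then 1 else t) = 1 + (Fintype.card β - 1) * t := by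
    rw [Fintype.sum_eq_add_sum_compl b, if_pos rfl, sum_congr rfl fun a ha => if_neg
      (by simpa using ha), sum_const, card_compl, card_singleton, nsmul_eq_mul,
      Nat.cast_sub (Fintype.card_pos_iff.mpr ⟨b⟩), Nat.cast_one]
  calc ∑ v : ι → β, t ^ hammingDist v w
      = ∑ v : ι → β, ∏ i, (if v i = w i then 1 else t) := by
        refine sum_congr rfl fun v _ => ?_
        rw [prod_ite, prod_const_one, one_mul, prod_const, hammingDist]
    _ = (1 + (Fintype.card β - 1) * t) ^ Fintype.card ι := by
        rw [← Fintype.prod_sum (fun i a => if a = w i then 1 else t)]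
        simp only [hcoord, prod_const, card_univ]

theorem card_hammingBall_mul_rpow_le (w : ι → β) (r : ℝ) {t : ℝ} (ht0 : 0 ≤ t) (ht1 : t ≤ 1) :
    #(hammingBall w r) * t ^ r ≤ (1 + (Fintype.card β - 1) * t) ^ Fintype.card ι := calc
  #(hammingBall w r) * t ^ r = ∑ _v ∈ hammingBall w r, t ^ r := by
    rw [sum_const, nsmul_eq_mul]
  _ ≤ ∑ v ∈ hammingBall w r, t ^ hammingDist v w := sum_le_sum fun v hv => by
    rw [← Real.rpow_natCast]
    exact Real.rpow_le_rpow_of_exponent_ge' ht0 ht1 (Nat.cast_nonneg _) (mem_filter.mp hv).2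
  _ ≤ ∑ v, t ^ hammingDist v w := sum_le_sum_of_subset_of_nonneg (subset_univ _)
    fun _ _ _ => by positivity
  _ = _ := sum_pow_hammingDist w t

theorem card_hammingBall_le_rpow_qEntropy [Nontrivial β] (w : ι → β) {α : ℝ} (hα0 : 0 ≤ α)
    (hα : α ≤ 1 - 1 / Fintype.card β) :
    (#(hammingBall w (α * Fintype.card ι)) : ℝ) ≤
      (Fintype.card β : ℝ) ^ (qEntropy (Fintype.card β) α * Fintype.card ι) := by
  set q := Fintype.card β
  obtain rfl | hα0 := hα0.eq_or_lt
  · simpa [qEntropy] using card_hammingBall_mul_rpow_le w (0 * Fintype.card ι) le_rfl zero_le_one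
  have hq : 1 < q := Fintype.one_lt_card
  have hq0 : (0 : ℝ) < q := by positivity
  have hq1 : (0 : ℝ) < q - 1 := by
    have : (1 : ℝ) < q := by exact_mod_cast hq
    linarith
  have hα1 : 0 < 1 - α := by
    have : (0 : ℝ) < 1 / q := by positivity
    linarith
  -- this `t` minimises `(1 + (q - 1) t) / t ^ α`
  set t := α / ((q - 1) * (1 - α)) with ht
  have ht0 : 0 < t := by positivity
  have ht1 : t ≤ 1 := by
    rw [div_le_one (by positivity)]
    have := mul_le_mul_of_nonneg_right hα hq0.le
    rw [sub_mul, one_div_mul_cancel hq0.ne', one_mul] at this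
    nlinarith
  have hsum : 1 + ((q : ℝ) - 1) * t = (1 - α)⁻¹ := by
    rw [ht]
    field_simp
    ring
  have hball := card_hammingBall_mul_rpow_le w (α * Fintype.card ι) ht0.le ht1
  rw [hsum, ← Real.rpow_natCast, ← Real.rpow_neg_one, ← Real.rpow_mul hα1.le, neg_one_mul,
    ← rpow_qEntropy_mul_mul_rpow hq hα0 (by linarith)] at hball
  exact le_of_mul_le_mul_right hball (by positivity)

end HammingBall

theorem Real.logb_natCast_le_clog (b m : ℕ) : Real.logb b m ≤ Nat.clog b m := by
  rw [← Real.natCeil_logb_natCast]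
  exact Nat.le_ceil _

theorem one_lt_clog_mul_of_one_div_logb_lt {b m : ℕ} (hb : 1 < b) (hm : 1 < m) {x : ℝ}
    (hx : 1 / Real.logb b m < x) : 1 < Nat.clog b m * x := by
  have hlogb : 0 < Real.logb b m := Real.logb_pos (by exact_mod_cast hb) (by exact_mod_cast hm)
  have hx0 : 0 < x := (one_div_pos.mpr hlogb).trans hx
  rw [div_lt_iff₀ hlogb] at hx
  calc 1 < x * Real.logb b m := hx
    _ ≤ x * Nat.clog b m := by gcongr; exact Real.logb_natCast_le_clog b m
    _ = Nat.clog b m * x := mul_comm _ _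

theorem Nat.card_subtype_div_card_eq_one_sub {α : Type*} [Finite α] [Nonempty α] (p : α → Prop) :
    (Nat.card {a // p a} : ℝ) / Nat.card α = 1 - Nat.card {a // ¬ p a} / Nat.card α := by
  classical
  have hsplit := Nat.card_congr (Equiv.sumCompl p)
  rw [Nat.card_sum] at hsplit
  have hpos : (0 : ℝ) < Nat.card α := by exact_mod_cast Nat.card_pos
  rw [eq_sub_iff_add_eq, ← add_div, div_eq_one_iff_eq hpos.ne']
  exact_mod_cast hsplit

section ListDecoding

variable {F : Type*} {n k : ℕ}

def IsListDecodable [Semiring F] [DecidableEq F] (G : Matrix (Fin n) (Fin k) F) (α : ℝ) (L : ℕ) :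
    Prop :=
  ∀ w : Fin n → F, Nat.card {x : Fin k → F | (hammingDist (G *ᵥ x) w : ℝ) / n ≤ α} ≤ L

variable [Field F] [Fintype F] [DecidableEq F]

theorem exists_linearIndependent_of_not_isListDecodable (hn : 0 < n)
    {G : Matrix (Fin n) (Fin k) F} {α : ℝ} {L : ℕ} (hG : ¬ IsListDecodable G α L) :
    ∃ w : Fin n → F, ∃ v : Fin (Nat.clog (Fintype.card F) (L + 1)) → Fin k → F,
      LinearIndependent F v ∧ ∀ j, G *ᵥ v j ∈ hammingBall w (α * n) := by
  simp only [IsListDecodable, not_forall, not_le] at hG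
  obtain ⟨w, hw⟩ := hG
  obtain ⟨v, hv, hvS⟩ := exists_linearIndependent_fin_clog_of_le_card (K := F) hw
  refine ⟨w, v, hv, fun j => ?_⟩
  simpa [hammingBall, div_le_iff₀ (Nat.cast_pos.mpr hn : (0 : ℝ) < n)] using hvS j

theorem card_not_isListDecodable_div_le (hn : 0 < n) {α : ℝ} (hα0 : 0 ≤ α)
    (hα : α ≤ 1 - 1 / Fintype.card F) (L : ℕ) :
    (Nat.card {G : Matrix (Fin n) (Fin k) F // ¬ IsListDecodable G α L} : ℝ) /
        Nat.card (Matrix (Fin n) (Fin k) F) ≤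
      (Fintype.card F : ℝ) ^ (n + (k - (1 - qEntropy (Fintype.card F) α) * n) *
        Nat.clog (Fintype.card F) (L + 1) : ℝ) := by
  set q : ℝ := (Fintype.card F : ℝ)
  set J := Nat.clog (Fintype.card F) (L + 1)
  have hq : (0 : ℝ) < q := by simp [q, Fintype.card_pos]
  let fiber (p : (Fin n → F) × (Fin J → Fin k → F)) : Finset (Matrix (Fin n) (Fin k) F) :=
    {G | ∀ j, G *ᵥ p.2 j ∈ hammingBall p.1 (α * n)}
  classical
  let witnesses : Finset ((Fin n → F) × (Fin J → Fin k → F)) :=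
    univ ×ˢ ({v | LinearIndependent F v} : Finset (Fin J → Fin k → F))
  have hcover : ({G | ¬ IsListDecodable G α L} : Finset _) ⊆ witnesses.biUnion fiber := by
    intro G hG
    obtain ⟨w, v, hv, hwv⟩ :=
      exists_linearIndependent_of_not_isListDecodable hn (mem_filter.mp hG).2
    exact mem_biUnion.mpr ⟨(w, v), by simp [witnesses, hv], by simp [fiber, hwv]⟩
  have hfiber : ∀ p ∈ witnesses, (#(fiber p) : ℝ) / Fintype.card (Matrix (Fin n) (Fin k) F) ≤
      (q ^ (qEntropy (Fintype.card F) α * n) / q ^ n) ^ J := fun p hp => by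
    have hv : LinearIndependent F p.2 := (mem_filter.mp (mem_product.mp hp).2).2
    -- `convert` only reconciles the instances deciding `∀ j : Fin J`
    rw [show (#(fiber p) : ℝ) / Fintype.card (Matrix (Fin n) (Fin k) F) =
        (#(hammingBall p.1 (α * n)) / Fintype.card (Fin n → F)) ^ Fintype.card (Fin J) by
      convert Matrix.card_filter_forall_mulVec_mem_div hv _, Fintype.card_fin]
    gcongr
    · simpa using card_hammingBall_le_rpow_qEntropy p.1 hα0 hα
    · simp [q]
  have hwitnesses : (#witnesses : ℝ) ≤ q ^ n * q ^ (k * J) := by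
    rw [card_product, card_univ, Fintype.card_fun, Fintype.card_fin, pow_mul]
    push_cast
    gcongr
    have : #({v | LinearIndependent F v} : Finset (Fin J → Fin k → F)) ≤
        (Fintype.card F ^ k) ^ J := (card_filter_le _ _).trans_eq (by simp)
    simpa [q] using (Nat.cast_le (α := ℝ)).mpr this
  calc (Nat.card {G : Matrix (Fin n) (Fin k) F // ¬ IsListDecodable G α L} : ℝ) /
        Nat.card (Matrix (Fin n) (Fin k) F)
      = #{G | ¬ IsListDecodable G α L} / Fintype.card (Matrix (Fin n) (Fin k) F) := by
        rw [Nat.card_eq_fintype_card, Nat.card_eq_fintype_card, Fintype.card_subtype]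
    _ ≤ ∑ p ∈ witnesses, (#(fiber p) : ℝ) / Fintype.card (Matrix (Fin n) (Fin k) F) := by
        rw [← sum_div]
        gcongr
        exact_mod_cast (card_le_card hcover).trans card_biUnion_le
    _ ≤ #witnesses * (q ^ (qEntropy (Fintype.card F) α * n) / q ^ n) ^ J := by
        simpa using sum_le_card_nsmul _ _ _ hfiber
    _ ≤ q ^ n * q ^ (k * J) * (q ^ (qEntropy (Fintype.card F) α * n) / q ^ n) ^ J := by
        gcongr
    _ = q ^ (n + (k - (1 - qEntropy (Fintype.card F) α) * n) * J : ℝ) := by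
        simp only [← Real.rpow_natCast, ← Real.rpow_sub hq, ← Real.rpow_mul hq.le,
          ← Real.rpow_add hq]
        push_cast
        ring_nf

end ListDecoding

/-- A uniformly random linear code of rate `ρ < 1 - H_q(α) - 1/log_q(L+1)` is
`(α, L)`-list decodable with probability `1 - 2^{-Ω(n)}`, for sufficiently large `n`. -/
theorem random_linear_list_decodable (F : Type*) [Field F] [Fintype F] [DecidableEq F]
    (q : ℕ) (hq : Fintype.card F = q) (α ρ : ℝ) (L : ℕ) (hL : 0 < L)
    (hα0 : 0 ≤ α) (hα : α < 1 - 1 / q)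
    (hρ0 : 0 ≤ ρ) (hρ : ρ < 1 - qEntropy q α - 1 / Real.logb q (L + 1)) :
    ∃ c : ℝ, 0 < c ∧ ∃ N : ℕ, ∀ n : ℕ, N ≤ n →
      (1 : ℝ) - 2 ^ (-(c * n)) ≤
        (Nat.card {G : Matrix (Fin n) (Fin ⌊ρ * n⌋₊) F //
            ∀ w : Fin n → F,
              Nat.card {x : Fin ⌊ρ * n⌋₊ → F |
                (hammingDist (G.mulVec x) w : ℝ) / n ≤ α} ≤ L} : ℝ)
          / (Nat.card (Matrix (Fin n) (Fin ⌊ρ * n⌋₊) F) : ℝ) := by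
  subst hq
  set J := Nat.clog (Fintype.card F) (L + 1)
  set H := qEntropy (Fintype.card F) α
  have hq2 : (2 : ℝ) ≤ Fintype.card F := by exact_mod_cast Fintype.one_lt_card
  have hc : 0 < J * (1 - H - ρ) - 1 := by
    have := one_lt_clog_mul_of_one_div_logb_lt Fintype.one_lt_card (Nat.succ_lt_succ hL)
      (x := 1 - H - ρ) (by rw [Nat.cast_succ]; exact lt_sub_comm.mp hρ)
    linarith
  refine ⟨J * (1 - H - ρ) - 1, hc, 1, fun n hn => ?_⟩
  have hk : (⌊ρ * n⌋₊ : ℝ) ≤ ρ * n := Nat.floor_le (by positivity)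
  have hbad := card_not_isListDecodable_div_le (k := ⌊ρ * n⌋₊) hn hα0 hα.le L
  have hexp : (Fintype.card F : ℝ) ^ (n + (⌊ρ * n⌋₊ - (1 - H) * n) * J : ℝ) ≤
      2 ^ (-((J * (1 - H - ρ) - 1) * n)) := calc
    _ ≤ (Fintype.card F : ℝ) ^ (-((J * (1 - H - ρ) - 1) * n)) :=
      Real.rpow_le_rpow_of_exponent_le (by linarith) (by nlinarith [J.cast_nonneg (α := ℝ)])
    _ ≤ 2 ^ (-((J * (1 - H - ρ) - 1) * n)) :=
      Real.rpow_le_rpow_of_nonpos two_pos hq2 (by nlinarith [n.cast_nonneg (α := ℝ)])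
  rw [Nat.card_subtype_div_card_eq_one_sub]
  change _ ≤ 1 - (Nat.card {G // ¬ IsListDecodable G α L} : ℝ) / _
  linarith
end
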